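/- Let F ∈ C²(ℝ) be nonnegative with F'' ≥ −c̃ (c̃ ≥ 0) and suppose |F''(r)| ≤ C_F(1 + F(r)) for all r ∈ ℝ. With the Yosida setup (F̃ = F + (c̃/2)(·)², J_δ, F''_δ(s) = J'_δ(s)F''(J_δ(s)) + c̃(J'_δ(s)−1)), one has, for every δ > 0 and s ∈ ℝ, the δ-independent bound |F''_δ(s)| ≤ C_F·F(s) + (C_F·c̃/2)·s² + C_F + 2c̃. -/

import Mathlib

/-!
`F̃ = F + (c̃/2)·s²` is convex because `F'' ≥ -c̃`, and `J_δ(s)` is one implicit Euler step for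
`F̃`: `s = J_δ(s) + δ F̃'(J_δ(s))`. The tangent line of `F̃` at `J_δ(s)` then gives
`F̃(s) ≥ F̃(J_δ(s)) + δ F̃'(J_δ(s))² ≥ F̃(J_δ(s))`, so `F(J_δ(s)) ≤ F(s) + (c̃/2)s²`.
Since `J'_δ ∈ (0,1]`, `|F''_δ(s)| ≤ |F''(J_δ(s))| + c̃ ≤ C_F(1 + F(J_δ(s))) + c̃`, and the
energy bound finishes the estimate.
-/

open Set

lemma convexOn_univ_add_half_mul_sq {f : ℝ → ℝ} {c : ℝ} (hf : Differentiable ℝ f)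
    (hf' : Differentiable ℝ (deriv f)) (hf'' : ∀ x, -c ≤ deriv (deriv f) x) :
    ConvexOn ℝ univ (fun x => f x + c / 2 * x ^ 2) := by
  have hsq (x : ℝ) : HasDerivAt (fun x : ℝ => c / 2 * x ^ 2) (c * x) x :=
    ((hasDerivAt_pow 2 x).const_mul (c / 2)).congr_deriv (by norm_num; ring)
  refine convexOn_of_hasDerivWithinAt2_nonneg (f' := fun x => deriv f x + c * x)
    (f'' := fun x => deriv (deriv f) x + c) convex_univ
    (hf.continuous.add (by fun_prop)).continuousOn ?_ ?_ ?_
  · intro x _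
    exact ((hf x).hasDerivAt.add (hsq x)).hasDerivWithinAt
  · intro x _
    exact ((hf' x).hasDerivAt.add ((hasDerivAt_id x).const_mul c)).hasDerivWithinAt.congr_deriv
      (by simp)
  · intro x _
    linarith [hf'' x]

lemma ConvexOn.add_deriv_mul_sub_le {f : ℝ → ℝ} {x : ℝ} (hf : ConvexOn ℝ univ f)
    (hd : DifferentiableAt ℝ f x) (y : ℝ) : f x + deriv f x * (y - x) ≤ f y := by
  rcases lt_trichotomy x y with hxy | rfl | hyx
  · have h := hf.deriv_le_slope (mem_univ x) (mem_univ y) hxy hd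
    rw [slope_def_field, le_div_iff₀ (sub_pos.mpr hxy)] at h
    linarith
  · simp
  · have h := hf.slope_le_deriv (mem_univ y) (mem_univ x) hyx hd
    rw [slope_def_field, div_le_iff₀ (sub_pos.mpr hyx)] at h
    linarith

lemma ConvexOn.le_of_add_mul_deriv_eq {f : ℝ → ℝ} {x y δ : ℝ} (hf : ConvexOn ℝ univ f)
    (hd : DifferentiableAt ℝ f x) (hδ : 0 ≤ δ) (hxy : x + δ * deriv f x = y) : f x ≤ f y := by
  subst hxy
  have htangent := hf.add_deriv_mul_sub_le hd (x + δ * deriv f x)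
  rw [add_sub_cancel_left] at htangent
  nlinarith [mul_nonneg hδ (sq_nonneg (deriv f x))]

lemma abs_mul_add_mul_sub_one_le {a b c : ℝ} (ha : a ∈ Icc (0 : ℝ) 1) (hc : 0 ≤ c) :
    |a * b + c * (a - 1)| ≤ |b| + c := by
  obtain ⟨ha₀, ha₁⟩ := ha
  have hab : |a * b| ≤ |b| := by
    rw [abs_mul, abs_of_nonneg ha₀]
    exact mul_le_of_le_one_left (abs_nonneg b) ha₁
  have hca : |c * (a - 1)| ≤ c := by
    rw [abs_mul, abs_of_nonneg hc, abs_of_nonpos (by linarith)]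
    nlinarith
  exact (abs_add_le _ _).trans (add_le_add hab hca)

theorem regularized_second_derivative_uniform_bound_general
    (ct CF : ℝ) (hct : 0 ≤ ct) (hCF : 0 < CF)
    (F : ℝ → ℝ) (hF : ContDiff ℝ 2 F)
    (hF'' : ∀ r, -ct ≤ deriv (deriv F) r)
    (hF''bd : ∀ r, |deriv (deriv F) r| ≤ CF * (1 + F r))
    (δ : ℝ) (hδ : 0 < δ) (J : ℝ → ℝ)
    (hJ : ∀ x, J x + δ * deriv (fun s => F s + ct / 2 * s ^ 2) (J x) = x)
    (hJ' : ∀ s, deriv J s ∈ Set.Ioc (0:ℝ) 1) :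
    ∀ s : ℝ,
      |deriv J s * deriv (deriv F) (J s) + ct * (deriv J s - 1)| ≤
        CF * F s + CF * ct / 2 * s ^ 2 + CF + 2 * ct := by
  intro s
  have hFd : Differentiable ℝ F := hF.differentiable (by norm_num)
  have hconvex := convexOn_univ_add_half_mul_sq hFd hF.differentiable_deriv_two hF''
  have henergy : F (J s) ≤ F s + ct / 2 * s ^ 2 :=
    calc F (J s) ≤ F (J s) + ct / 2 * J s ^ 2 := by nlinarith [sq_nonneg (J s)]
      _ ≤ F s + ct / 2 * s ^ 2 :=
        hconvex.le_of_add_mul_deriv_eq ((hFd _).add (by fun_prop)) hδ.le (hJ s)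
  calc |deriv J s * deriv (deriv F) (J s) + ct * (deriv J s - 1)|
      ≤ |deriv (deriv F) (J s)| + ct :=
        abs_mul_add_mul_sub_one_le (Ioc_subset_Icc_self (hJ' s)) hct
    _ ≤ CF * (1 + F (J s)) + ct := by linarith [hF''bd (J s)]
    _ ≤ CF * F s + CF * ct / 2 * s ^ 2 + CF + 2 * ct := by
      nlinarith [mul_le_mul_of_nonneg_left henergy hCF.le]

/-- δ-independent bound on `F''_δ` under `|F''(r)| ≤ C_F(1 + F(r))`:
`|F''_δ(s)| ≤ C_F·F(s) + (C_F·c̃/2)s² + C_F + 2c̃`. -/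
theorem regularized_second_derivative_uniform_bound
    (ct CF : ℝ) (hct : 0 ≤ ct) (hCF : 0 < CF)
    (F : ℝ → ℝ) (hF : ContDiff ℝ 2 F) (hFnonneg : ∀ x, 0 ≤ F x)
    (hF'' : ∀ r, -ct ≤ deriv (deriv F) r)
    (hF''bd : ∀ r, |deriv (deriv F) r| ≤ CF * (1 + F r))
    (δ : ℝ) (hδ : 0 < δ) (J : ℝ → ℝ)
    (hJ : ∀ x, J x + δ * deriv (fun s => F s + ct / 2 * s ^ 2) (J x) = x)
    (hJdiff : Differentiable ℝ J) (hJ' : ∀ s, deriv J s ∈ Set.Ioc (0:ℝ) 1) :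
    ∀ s : ℝ,
      |deriv J s * deriv (deriv F) (J s) + ct * (deriv J s - 1)| ≤
        CF * F s + CF * ct / 2 * s ^ 2 + CF + 2 * ct :=
  regularized_second_derivative_uniform_bound_general ct CF hct hCF F hF hF'' hF''bd δ hδ J hJ hJ'
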